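/- arXiv:1312.4596 — 2 statements merged into one kernel-verified Lean document; each statement's English description precedes it below -/
import Mathlib

section
/- For $0<\theta_0<\theta_1$, $M>0$ and any $\eta\in\mathbb{R}$ in the admissible range of both tilting parameters, the identities $\mathcal{H}_1(\epsilon_\eta^1)=\mathcal{H}_0(\epsilon_\eta^0)$ hold, where $\epsilon_\eta^j = \frac{(\theta_1^2-\theta_0^2)^2M^2-4\theta_j^2(-2\eta+(\theta_1-\theta_0)M)^2}{4(\theta_1^2-\theta_0^2)(-2\eta+(\theta_1-\theta_0)M)^2}$ for $j=0,1$, $\mathcal{H}_j(\epsilon)=-\frac12\ln\big(\frac12+\frac12\mathcal{D}_j(\epsilon)\big)$, and $\mathcal{D}_j(\epsilon)=\frac{\theta_j+(\theta_1-\theta_0)\epsilon}{\sqrt{\theta_j^2+(\theta_1^2-\theta_0^2)\epsilon}}$. Equivalently, $\mathcal{D}_1(\epsilon_\eta^1)=\mathcal{D}_0(\epsilon_\eta^0)$. -/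
/-! The two tilting parameters differ by exactly one, `ε₁ = ε₀ - 1`, and shifting `ε` by one
turns the `θ₀`-ratio `𝒟₀` into the `θ₁`-ratio `𝒟₁`, since both the numerator and the radicand of
`𝒟_j(ε)` are affine in `ε` with increments `θ₁ - θ₀` and `θ₁² - θ₀²`. -/

theorem div_sub_one_eq_div {K : Type*} [Field K] (a b c d : K)
    (hw : 4 * (b ^ 2 - a ^ 2) * d ^ 2 ≠ 0) :
    (c - 4 * b ^ 2 * d ^ 2) / (4 * (b ^ 2 - a ^ 2) * d ^ 2)
      = (c - 4 * a ^ 2 * d ^ 2) / (4 * (b ^ 2 - a ^ 2) * d ^ 2) - 1 := by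
  rw [eq_sub_iff_add_eq, ← div_self hw, ← add_div]
  ring_nf

/-- The paper's `𝒟_j(ε)` is `tiltRatio θ₀ θ₁ θ_j ε`. -/
noncomputable def tiltRatio (θ0 θ1 θ ε : ℝ) : ℝ :=
  (θ + (θ1 - θ0) * ε) / Real.sqrt (θ ^ 2 + (θ1 ^ 2 - θ0 ^ 2) * ε)

theorem tiltRatio_sub_one (θ0 θ1 ε : ℝ) :
    tiltRatio θ0 θ1 θ1 (ε - 1) = tiltRatio θ0 θ1 θ0 ε := by
  unfold tiltRatio
  ring_nf

theorem stmt11_general (θ0 θ1 M η : ℝ) (h0 : 0 < θ0) (h01 : θ0 < θ1)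
    (hden : 2 * η ≠ (θ1 - θ0) * M)
    (ε0 ε1 : ℝ)
    (hε0 : ε0 = ((θ1 ^ 2 - θ0 ^ 2) ^ 2 * M ^ 2
        - 4 * θ0 ^ 2 * (-2 * η + (θ1 - θ0) * M) ^ 2) /
        (4 * (θ1 ^ 2 - θ0 ^ 2) * (-2 * η + (θ1 - θ0) * M) ^ 2))
    (hε1 : ε1 = ((θ1 ^ 2 - θ0 ^ 2) ^ 2 * M ^ 2
        - 4 * θ1 ^ 2 * (-2 * η + (θ1 - θ0) * M) ^ 2) /
        (4 * (θ1 ^ 2 - θ0 ^ 2) * (-2 * η + (θ1 - θ0) * M) ^ 2)) :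
    (θ1 + (θ1 - θ0) * ε1) / Real.sqrt (θ1 ^ 2 + (θ1 ^ 2 - θ0 ^ 2) * ε1)
      = (θ0 + (θ1 - θ0) * ε0) / Real.sqrt (θ0 ^ 2 + (θ1 ^ 2 - θ0 ^ 2) * ε0)
    ∧ -(1 / 2) * Real.log (1 / 2 + 1 / 2 *
        ((θ1 + (θ1 - θ0) * ε1) / Real.sqrt (θ1 ^ 2 + (θ1 ^ 2 - θ0 ^ 2) * ε1)))
      = -(1 / 2) * Real.log (1 / 2 + 1 / 2 *
        ((θ0 + (θ1 - θ0) * ε0) / Real.sqrt (θ0 ^ 2 + (θ1 ^ 2 - θ0 ^ 2) * ε0))) := by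
  have hsq : θ1 ^ 2 - θ0 ^ 2 ≠ 0 := by nlinarith
  have hd : -2 * η + (θ1 - θ0) * M ≠ 0 := fun h => hden (by linarith)
  have hε : ε1 = ε0 - 1 := by
    rw [hε0, hε1]
    exact div_sub_one_eq_div _ _ _ _ (by positivity)
  have hD : tiltRatio θ0 θ1 θ1 ε1 = tiltRatio θ0 θ1 θ0 ε0 := hε ▸ tiltRatio_sub_one θ0 θ1 ε0
  unfold tiltRatio at hD
  exact ⟨hD, by rw [hD]⟩

theorem stmt11 (θ0 θ1 M η : ℝ) (h0 : 0 < θ0) (h01 : θ0 < θ1) (hM : 0 < M)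
    (hden : 2 * η ≠ (θ1 - θ0) * M)
    (ε0 ε1 : ℝ)
    (hε0 : ε0 = ((θ1 ^ 2 - θ0 ^ 2) ^ 2 * M ^ 2
        - 4 * θ0 ^ 2 * (-2 * η + (θ1 - θ0) * M) ^ 2) /
        (4 * (θ1 ^ 2 - θ0 ^ 2) * (-2 * η + (θ1 - θ0) * M) ^ 2))
    (hε1 : ε1 = ((θ1 ^ 2 - θ0 ^ 2) ^ 2 * M ^ 2
        - 4 * θ1 ^ 2 * (-2 * η + (θ1 - θ0) * M) ^ 2) /
        (4 * (θ1 ^ 2 - θ0 ^ 2) * (-2 * η + (θ1 - θ0) * M) ^ 2))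
    (hpos0 : 0 < θ0 ^ 2 + (θ1 ^ 2 - θ0 ^ 2) * ε0)
    (hpos1 : 0 < θ1 ^ 2 + (θ1 ^ 2 - θ0 ^ 2) * ε1) :
    (θ1 + (θ1 - θ0) * ε1) / Real.sqrt (θ1 ^ 2 + (θ1 ^ 2 - θ0 ^ 2) * ε1)
      = (θ0 + (θ1 - θ0) * ε0) / Real.sqrt (θ0 ^ 2 + (θ1 ^ 2 - θ0 ^ 2) * ε0)
    ∧ -(1 / 2) * Real.log (1 / 2 + 1 / 2 *
        ((θ1 + (θ1 - θ0) * ε1) / Real.sqrt (θ1 ^ 2 + (θ1 ^ 2 - θ0 ^ 2) * ε1)))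
      = -(1 / 2) * Real.log (1 / 2 + 1 / 2 *
        ((θ0 + (θ1 - θ0) * ε0) / Real.sqrt (θ0 ^ 2 + (θ1 ^ 2 - θ0 ^ 2) * ε0))) :=
  stmt11_general θ0 θ1 M η h0 h01 hden ε0 ε1 hε0 hε1
end

section
/- For $0<\theta_0<\theta_1$, $M>0$, $j\in\{0,1\}$, and $\eta$ with $2\eta<(\theta_1-\theta_0)M$, the Legendre-type transform identity $M\mathcal{L}_j(\epsilon_\eta^j)-\eta\epsilon_\eta^j = -I_j(\eta)$ holds, where $\mathcal{L}_j(\epsilon)=\frac12(\theta_j+(\theta_1-\theta_0)\epsilon-\sqrt{\theta_j^2+(\theta_1^2-\theta_0^2)\epsilon})$, $\epsilon_\eta^j = \frac{(\theta_1^2-\theta_0^2)^2M^2-4\theta_j^2(-2\eta+(\theta_1-\theta_0)M)^2}{4(\theta_1^2-\theta_0^2)(-2\eta+(\theta_1-\theta_0)M)^2}$, and $I_j(\eta)=-\frac{(4\theta_j\eta+(-1)^j(\theta_1-\theta_0)^2M)^2}{8(2\eta-(\theta_1-\theta_0)M)(\theta_1^2-\theta_0^2)}$, provided $\theta_j^2+(\theta_1^2-\theta_0^2)\epsilon_\eta^j>0$.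 -/
/-! At the critical point `ε` the radicand `θ² + s ε` is the perfect square `(s M / (2 d))²`,
where `s = θ₁² - θ₀²` and `d = (θ₁ - θ₀) M - 2η > 0`, so the square root disappears and the
Legendre-type expression collapses to `-(s M - 2 θ d)² / (8 s d)`. Since `θ₁ + θ₀ - 2θⱼ = ∓(θ₁ - θ₀)`,
the numerator `s M - 2 θⱼ d` equals `4 θⱼ η ± (θ₁ - θ₀)² M`. -/

/-- The paper's `ε_η^j`, with `s = θ₁² - θ₀²` and `d = -2η + (θ₁ - θ₀) M`. -/
noncomputable def criticalPoint (θ s M d : ℝ) : ℝ :=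
  (s ^ 2 * M ^ 2 - 4 * θ ^ 2 * d ^ 2) / (4 * s * d ^ 2)

theorem sq_add_mul_criticalPoint (θ s M d : ℝ) (hs : s ≠ 0) (hd : d ≠ 0) :
    θ ^ 2 + s * criticalPoint θ s M d = (s * M / (2 * d)) ^ 2 := by
  unfold criticalPoint
  field_simp
  ring

theorem sqrt_add_mul_criticalPoint (θ s M d : ℝ) (hs : 0 < s) (hM : 0 ≤ M) (hd : 0 < d) :
    √(θ ^ 2 + s * criticalPoint θ s M d) = s * M / (2 * d) := by
  rw [sq_add_mul_criticalPoint θ s M d hs.ne' hd.ne', Real.sqrt_sq (by positivity)]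

theorem legendre_criticalPoint (θ a s M η d : ℝ) (hs : s ≠ 0) (hd : d ≠ 0)
    (had : -2 * η + a * M = d) :
    M * (1 / 2 * (θ + a * criticalPoint θ s M d - s * M / (2 * d))) - η * criticalPoint θ s M d
      = -(s * M - 2 * θ * d) ^ 2 / (8 * s * d) := by
  obtain rfl : η = (a * M - d) / 2 := by linarith
  unfold criticalPoint
  field_simp
  ring

theorem sub_two_mul_eq_signed {θ0 θ1 M η θj : ℝ} {j : ℕ} (hj : j ≤ 1)
    (hθj : θj = if j = 0 then θ0 else θ1) :
    (θ1 ^ 2 - θ0 ^ 2) * M - 2 * θj * (-2 * η + (θ1 - θ0) * M)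
      = 4 * θj * η + (-1 : ℝ) ^ j * (θ1 - θ0) ^ 2 * M := by
  interval_cases j <;> simp only [hθj] <;> norm_num <;> ring

theorem stmt16_general (θ0 θ1 M η : ℝ) (j : ℕ) (hj : j ≤ 1) (θj : ℝ)
    (hθj : θj = if j = 0 then θ0 else θ1)
    (h0 : 0 < θ0) (h01 : θ0 < θ1) (hM : 0 < M)
    (hη : 2 * η < (θ1 - θ0) * M)
    (ε : ℝ)
    (hε : ε = ((θ1 ^ 2 - θ0 ^ 2) ^ 2 * M ^ 2
        - 4 * θj ^ 2 * (-2 * η + (θ1 - θ0) * M) ^ 2) /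
        (4 * (θ1 ^ 2 - θ0 ^ 2) * (-2 * η + (θ1 - θ0) * M) ^ 2)) :
    M * (1 / 2 * (θj + (θ1 - θ0) * ε - Real.sqrt (θj ^ 2 + (θ1 ^ 2 - θ0 ^ 2) * ε))) - η * ε
      = -(-((4 * θj * η + (-1 : ℝ) ^ j * (θ1 - θ0) ^ 2 * M) ^ 2 /
        (8 * (2 * η - (θ1 - θ0) * M) * (θ1 ^ 2 - θ0 ^ 2)))) := by
  have hs : 0 < θ1 ^ 2 - θ0 ^ 2 := by nlinarith
  have hd : 0 < -2 * η + (θ1 - θ0) * M := by linarith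
  have hε : ε = criticalPoint θj (θ1 ^ 2 - θ0 ^ 2) M (-2 * η + (θ1 - θ0) * M) := hε
  subst hε
  rw [sqrt_add_mul_criticalPoint _ _ _ _ hs hM.le hd,
    legendre_criticalPoint _ _ _ _ _ _ hs.ne' hd.ne' rfl, sub_two_mul_eq_signed hj hθj,
    show 2 * η - (θ1 - θ0) * M = -(-2 * η + (θ1 - θ0) * M) by ring]
  field_simp

theorem stmt16 (θ0 θ1 M η : ℝ) (j : ℕ) (hj : j ≤ 1) (θj : ℝ)
    (hθj : θj = if j = 0 then θ0 else θ1)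
    (h0 : 0 < θ0) (h01 : θ0 < θ1) (hM : 0 < M)
    (hη : 2 * η < (θ1 - θ0) * M)
    (ε : ℝ)
    (hε : ε = ((θ1 ^ 2 - θ0 ^ 2) ^ 2 * M ^ 2
        - 4 * θj ^ 2 * (-2 * η + (θ1 - θ0) * M) ^ 2) /
        (4 * (θ1 ^ 2 - θ0 ^ 2) * (-2 * η + (θ1 - θ0) * M) ^ 2))
    (hpos : 0 < θj ^ 2 + (θ1 ^ 2 - θ0 ^ 2) * ε) :
    M * (1 / 2 * (θj + (θ1 - θ0) * ε - Real.sqrt (θj ^ 2 + (θ1 ^ 2 - θ0 ^ 2) * ε))) - η * ε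
      = -(-((4 * θj * η + (-1 : ℝ) ^ j * (θ1 - θ0) ^ 2 * M) ^ 2 /
        (8 * (2 * η - (θ1 - θ0) * M) * (θ1 ^ 2 - θ0 ^ 2)))) :=
  stmt16_general θ0 θ1 M η j hj θj hθj h0 h01 hM hη ε hε
end
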